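/- In any Kummer structure, if 2a = 0 and 2b = 0 then there exists c with 2c = 0 and a b → c c. -/

import Mathlib

/-!
If `2a = 0` then `κ{a,a} = {0,0}`, and axiom A3 applied to `a, a, b` turns this into an involution:
every `c` with `a b → c ·` satisfies `a c → b b`. Applying this twice shows that `a b → c c`, and
doubling with A4 gives `0 0 → 2c 2c`, while `0 0 → 0 0` by A1.
-/

/-- A Kummer structure: a set `K` with a map `κ : Sym² K → Sym² K`
(written `a b → c d` for `κ{a,b} = {c,d}`), a distinguished element `0`
and a doubling map `a ↦ 2a`, satisfying axioms A1–A4. -/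
structure KummerStructure (K : Type*) where
  kappa : Sym2 K → Sym2 K
  zero : K
  double : K → K
  A1 : ∀ a, kappa s(a, zero) = s(a, a)
  A2 : ∀ a, kappa s(a, a) = s(zero, double a)
  A3 : ∀ a b c, ∃ p₀ p₁ q₀ q₁ s₀ s₁ s₂ s₃,
      kappa s(a, b) = s(p₀, p₁) ∧ kappa s(c, b) = s(q₀, q₁) ∧
      kappa s(c, p₀) = s(s₀, s₁) ∧ kappa s(c, p₁) = s(s₂, s₃) ∧
      kappa s(a, q₀) = s(s₀, s₁) ∧ kappa s(a, q₁) = s(s₂, s₃)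
  A4 : ∀ a b c d, kappa s(a, b) = s(c, d) →
      kappa s(double a, double b) = s(double c, double d)

namespace KummerStructure

variable {K : Type*} (S : KummerStructure K) {a b c : K}

theorem eq_of_mem_diag {x y : K} (h : x ∈ s(y, y)) : x = y := by
  simpa using Sym2.mem_iff.mp h

theorem kappa_self_of_double_eq_zero (ha : S.double a = S.zero) :
    S.kappa s(a, a) = s(S.zero, S.zero) := by
  rw [S.A2, ha]

theorem kappa_of_mem_kappa (ha : S.double a = S.zero) (hc : c ∈ S.kappa s(a, b)) :
    S.kappa s(a, c) = s(b, b) := by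
  obtain ⟨p₀, p₁, q₀, q₁, s₀, s₁, s₂, s₃, hp, hq, hs₀, hs₁, hq₀, hq₁⟩ := S.A3 a a b
  rw [S.kappa_self_of_double_eq_zero ha] at hp
  have hp₀ : p₀ = S.zero := eq_of_mem_diag (hp ▸ Sym2.mem_mk_left p₀ p₁)
  have hp₁ : p₁ = S.zero := eq_of_mem_diag (hp ▸ Sym2.mem_mk_right p₀ p₁)
  rw [hp₀, S.A1] at hs₀
  rw [hp₁, S.A1] at hs₁
  rw [Sym2.eq_swap, hq] at hc
  rcases Sym2.mem_iff.mp hc with rfl | rfl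
  · rw [hq₀, hs₀]
  · rw [hq₁, hs₁]

theorem kappa_eq_diag_of_mem_kappa (ha : S.double a = S.zero) (hc : c ∈ S.kappa s(a, b)) :
    S.kappa s(a, b) = s(c, c) :=
  S.kappa_of_mem_kappa ha (S.kappa_of_mem_kappa ha hc ▸ Sym2.mem_mk_left b b)

theorem double_eq_zero_of_kappa_eq_diag (ha : S.double a = S.zero) (hb : S.double b = S.zero)
    (h : S.kappa s(a, b) = s(c, c)) : S.double c = S.zero := by
  have h₂ := S.A4 a b c c h
  rw [ha, hb, S.A1] at h₂
  exact (eq_of_mem_diag (h₂ ▸ Sym2.mem_mk_left S.zero S.zero)).symm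

end KummerStructure

/-- L6: if `2a = 0` and `2b = 0` then `a b → c c` for some `c` with `2c = 0`. -/
theorem kummer_two_torsion_add {K : Type*} (S : KummerStructure K) (a b : K)
    (ha : S.double a = S.zero) (hb : S.double b = S.zero) :
    ∃ c, S.double c = S.zero ∧ S.kappa s(a, b) = s(c, c) := by
  set c := (S.kappa s(a, b)).out.1
  have hab : S.kappa s(a, b) = s(c, c) :=
    S.kappa_eq_diag_of_mem_kappa ha (Sym2.out_fst_mem _)
  exact ⟨c, S.double_eq_zero_of_kappa_eq_diag ha hb hab, hab⟩
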